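/- arXiv:1309.3880 — 9 statements merged into one kernel-verified Lean document; each statement's English description precedes it below -/
import Mathlib

section
/- The rational map F: R^2 → R^2 defined by F(a_1, a_2) = (a_2, (1 + a_1)/(a_1 a_2 - 1)) satisfies F^5 = id on the open set where all iterates are defined (the Gauss map is 5-periodic). -/
/-- The Gauss map. -/
noncomputable def gaussF (p : ℝ × ℝ) : ℝ × ℝ :=
  (p.2, (1 + p.1) / (p.1 * p.2 - 1))

/-!
Write `D = a b - 1`. The iterates of `(a, b)` are the consecutive pairs `(xₘ, xₘ₊₁)` of the
sequence `a, b, (1 + a)/D, D, (1 + b)/D, a, b`, and along it `xₘ xₘ₊₁ - 1 = xₘ₊₃`. So the `m`-th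
denominator being nonzero says `xₘ₊₃ ≠ 0`: `D`, `(1 + b)/D`, `a`, `b` and `(1 + a)/D` are nonzero,
which are exactly the divisions the closed forms of the iterates need.
-/

def gaussDenom (p : ℝ × ℝ) : ℝ := p.1 * p.2 - 1

theorem gaussF_eq (p : ℝ × ℝ) : gaussF p = (p.2, (1 + p.1) / gaussDenom p) := rfl

theorem gaussDenom_mk (x y : ℝ) : gaussDenom (x, y) = x * y - 1 := rfl

section Orbit

variable {a b D : ℝ}

theorem gaussF_iterate_one (hab : a * b - 1 = D) : gaussF^[1] (a, b) = (b, (1 + a) / D) := by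
  rw [Function.iterate_one, gaussF_eq, gaussDenom_mk, hab]

theorem gaussDenom_iterate_one (hD : D ≠ 0) (hab : a * b - 1 = D) :
    gaussDenom (gaussF^[1] (a, b)) = (b + 1) / D := by
  rw [gaussF_iterate_one hab, gaussDenom_mk]
  field_simp
  linear_combination hab

theorem gaussF_iterate_two (hD : D ≠ 0) (hab : a * b - 1 = D) (hb : b + 1 ≠ 0) :
    gaussF^[2] (a, b) = ((1 + a) / D, D) := by
  rw [Function.iterate_succ_apply', gaussF_eq, gaussDenom_iterate_one hD hab,
    gaussF_iterate_one hab, Prod.mk.injEq]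
  refine ⟨rfl, ?_⟩
  field_simp
  ring

theorem gaussDenom_iterate_two (hD : D ≠ 0) (hab : a * b - 1 = D) (hb : b + 1 ≠ 0) :
    gaussDenom (gaussF^[2] (a, b)) = a := by
  rw [gaussF_iterate_two hD hab hb, gaussDenom_mk]
  field_simp
  ring

theorem gaussF_iterate_three (hD : D ≠ 0) (hab : a * b - 1 = D) (hb : b + 1 ≠ 0) (ha : a ≠ 0) :
    gaussF^[3] (a, b) = (D, (b + 1) / D) := by
  rw [Function.iterate_succ_apply', gaussF_eq, gaussDenom_iterate_two hD hab hb,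
    gaussF_iterate_two hD hab hb, Prod.mk.injEq]
  refine ⟨rfl, ?_⟩
  field_simp
  linear_combination -hab

theorem gaussDenom_iterate_three (hD : D ≠ 0) (hab : a * b - 1 = D) (hb : b + 1 ≠ 0)
    (ha : a ≠ 0) : gaussDenom (gaussF^[3] (a, b)) = b := by
  rw [gaussF_iterate_three hD hab hb ha, gaussDenom_mk]
  field_simp
  ring

theorem gaussF_iterate_four (hD : D ≠ 0) (hab : a * b - 1 = D) (hb : b + 1 ≠ 0) (ha : a ≠ 0)
    (hb₀ : b ≠ 0) : gaussF^[4] (a, b) = ((b + 1) / D, a) := by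
  rw [Function.iterate_succ_apply', gaussF_eq, gaussDenom_iterate_three hD hab hb ha,
    gaussF_iterate_three hD hab hb ha, Prod.mk.injEq]
  refine ⟨rfl, ?_⟩
  field_simp
  linear_combination -hab

theorem gaussDenom_iterate_four (hD : D ≠ 0) (hab : a * b - 1 = D) (hb : b + 1 ≠ 0) (ha : a ≠ 0)
    (hb₀ : b ≠ 0) : gaussDenom (gaussF^[4] (a, b)) = (a + 1) / D := by
  rw [gaussF_iterate_four hD hab hb ha hb₀, gaussDenom_mk]
  field_simp
  linear_combination hab

theorem gaussF_iterate_five (hD : D ≠ 0) (hab : a * b - 1 = D) (hb : b + 1 ≠ 0) (ha : a ≠ 0)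
    (hb₀ : b ≠ 0) (ha₁ : a + 1 ≠ 0) : gaussF^[5] (a, b) = (a, b) := by
  rw [Function.iterate_succ_apply', gaussF_eq, gaussDenom_iterate_four hD hab hb ha hb₀,
    gaussF_iterate_four hD hab hb ha hb₀, Prod.mk.injEq]
  refine ⟨rfl, ?_⟩
  field_simp
  linear_combination -hab

end Orbit

/-- The Gauss map `F(a₁,a₂) = (a₂, (1+a₁)/(a₁a₂-1))` is 5-periodic
wherever all iterates are defined. -/
theorem stmt2 (p : ℝ × ℝ)
    (hdef : ∀ m < 5, (gaussF^[m] p).1 * (gaussF^[m] p).2 - 1 ≠ 0) :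
    gaussF^[5] p = p := by
  have hdenom (m : ℕ) (hm : m < 5) : gaussDenom (gaussF^[m] p) ≠ 0 := hdef m hm
  obtain ⟨a, b⟩ := p
  obtain ⟨D, hab⟩ : ∃ D, a * b - 1 = D := ⟨_, rfl⟩
  have hD : D ≠ 0 := hab ▸ hdef 0 (by norm_num)
  have hb : b + 1 ≠ 0 :=
    (div_ne_zero_iff.mp (gaussDenom_iterate_one hD hab ▸ hdenom 1 (by norm_num))).1
  have ha : a ≠ 0 := gaussDenom_iterate_two hD hab hb ▸ hdenom 2 (by norm_num)
  have hb₀ : b ≠ 0 := gaussDenom_iterate_three hD hab hb ha ▸ hdenom 3 (by norm_num)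
  have ha₁ : a + 1 ≠ 0 :=
    (div_ne_zero_iff.mp (gaussDenom_iterate_four hD hab hb ha hb₀ ▸ hdenom 4 (by norm_num))).1
  exact gaussF_iterate_five hD hab hb ha hb₀ ha₁
end

section
/- The rational map Φ: R^2 → R^2 defined by Φ(b, a) = (a, (a+1)/b) satisfies Φ^{10} = id on the open set where all iterates are defined. -/
/-!
`Φ` is the Lyness recurrence `x_{n+1} = (x_n + 1) / x_{n-1}` written on consecutive pairs. Computing
the orbit of `(b, a)` explicitly gives the five points
`(b, a), (a, (a+1)/b), ((a+1)/b, (a+b+1)/(ab)), ((a+b+1)/(ab), (b+1)/a), ((b+1)/a, b)`,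
after which the orbit closes up: `Φ` already has period `5`, hence period `10`.
-/

noncomputable def phiMap (p : ℝ × ℝ) : ℝ × ℝ :=
  (p.2, (p.2 + 1) / p.1)

section Orbit

variable {b a : ℝ}

lemma phiMap_mk (b a : ℝ) : phiMap (b, a) = (a, (a + 1) / b) := rfl

lemma phiMap_iterate_two (hb : b ≠ 0) (ha : a ≠ 0) :
    phiMap^[2] (b, a) = ((a + 1) / b, (a + b + 1) / (b * a)) := by
  rw [Function.iterate_succ_apply', Function.iterate_one, phiMap_mk, phiMap_mk]
  congr 1
  field_simp
  ring

lemma phiMap_iterate_three (hb : b ≠ 0) (ha : a ≠ 0) (ha₁ : a + 1 ≠ 0) :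
    phiMap^[3] (b, a) = ((a + b + 1) / (b * a), (b + 1) / a) := by
  rw [Function.iterate_succ_apply', phiMap_iterate_two hb ha, phiMap_mk]
  congr 1
  field_simp
  ring

lemma phiMap_iterate_four (hb : b ≠ 0) (ha : a ≠ 0) (ha₁ : a + 1 ≠ 0)
    (hab : a + b + 1 ≠ 0) :
    phiMap^[4] (b, a) = ((b + 1) / a, b) := by
  rw [Function.iterate_succ_apply', phiMap_iterate_three hb ha ha₁, phiMap_mk]
  congr 1
  field_simp
  ring

lemma isPeriodicPt_phiMap_five (hb : b ≠ 0) (ha : a ≠ 0) (ha₁ : a + 1 ≠ 0)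
    (hab : a + b + 1 ≠ 0) (hb₁ : b + 1 ≠ 0) :
    Function.IsPeriodicPt phiMap 5 (b, a) := by
  change phiMap^[5] (b, a) = (b, a)
  rw [Function.iterate_succ_apply', phiMap_iterate_four hb ha ha₁ hab, phiMap_mk]
  congr 1
  field_simp

end Orbit

/-- The rational map `Φ(b,a) = (a,(a+1)/b)` is 10-periodic
wherever all iterates are defined. -/
theorem stmt3 (p : ℝ × ℝ)
    (hdef : ∀ m < 10, (phiMap^[m] p).1 ≠ 0) :
    phiMap^[10] p = p := by
  obtain ⟨b, a⟩ := p
  have hb : b ≠ 0 := hdef 0 (by norm_num)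
  have ha : a ≠ 0 := hdef 1 (by norm_num)
  have ha₁ : a + 1 ≠ 0 := by
    have h := hdef 2 (by norm_num)
    rw [phiMap_iterate_two hb ha] at h
    exact (div_ne_zero_iff.mp h).1
  have hab : a + b + 1 ≠ 0 := by
    have h := hdef 3 (by norm_num)
    rw [phiMap_iterate_three hb ha ha₁] at h
    exact (div_ne_zero_iff.mp h).1
  have hb₁ : b + 1 ≠ 0 := by
    have h := hdef 4 (by norm_num)
    rw [phiMap_iterate_four hb ha ha₁ hab] at h
    exact (div_ne_zero_iff.mp h).1
  exact (isPeriodicPt_phiMap_five hb ha ha₁ hab hb₁).mul_const 2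
end

section
/- The rational map G_o: R^4 → R^4 defined by G_o(a_1, b_1, a_2, b_2) = (b_1, a_2, b_2, (a_2 + a_1 b_2 - 1)/(a_1 a_2 - b_1)) satisfies G_o^7 = id on the open set where all iterates are defined. -/
/-!
`G_o` shifts the window of four consecutive terms of a sequence satisfying
`x (n+4) * (x n * x (n+2) - x (n+1)) = x (n+2) + x n * x (n+3) - 1`, as long as the factor
`x n * x (n+2) - x (n+1)` is nonzero. The sequence starting with `a, b, c, d` continues with three
rational functions of `a, b, c, d` and then returns to `a, b, c, d`. Their only denominators are
`a * c - b` and `b * d - c`, so once these are cleared the recurrence becomes seven polynomial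
identities, and the 7-periodicity of the sequence gives `G_o^[7] = id`.
-/

/-- The map `G_o(a₁,b₁,a₂,b₂) = (b₁,a₂,b₂,(a₂+a₁b₂-1)/(a₁a₂-b₁))`. -/
noncomputable def goMap (p : ℝ × ℝ × ℝ × ℝ) : ℝ × ℝ × ℝ × ℝ :=
  (p.2.1, p.2.2.1, p.2.2.2,
    (p.2.2.1 + p.1 * p.2.2.2 - 1) / (p.1 * p.2.2.1 - p.2.1))

def window (x : ℕ → ℝ) (n : ℕ) : ℝ × ℝ × ℝ × ℝ :=
  (x n, x (n + 1), x (n + 2), x (n + 3))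

theorem goMap_window {x : ℕ → ℝ} {n : ℕ} (hden : x n * x (n + 2) - x (n + 1) ≠ 0)
    (hrec : x (n + 4) * (x n * x (n + 2) - x (n + 1)) = x (n + 2) + x n * x (n + 3) - 1) :
    goMap (window x n) = window x (n + 1) := by
  simp only [goMap, window, eq_div_of_mul_eq hden hrec]

theorem iterate_goMap_window {x : ℕ → ℝ} {N : ℕ}
    (hrec : ∀ n < N,
      x (n + 4) * (x n * x (n + 2) - x (n + 1)) = x (n + 2) + x n * x (n + 3) - 1)
    (hden : ∀ n < N,
      (goMap^[n] (window x 0)).1 * (goMap^[n] (window x 0)).2.2.1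
        - (goMap^[n] (window x 0)).2.1 ≠ 0) :
    goMap^[N] (window x 0) = window x N := by
  induction N with
  | zero => rfl
  | succ N ih =>
    have hN : goMap^[N] (window x 0) = window x N :=
      ih (fun n hn ↦ hrec n (by omega)) (fun n hn ↦ hden n (by omega))
    have hdenN := hden N N.lt_succ_self
    rw [hN] at hdenN
    rw [Function.iterate_succ_apply', hN]
    exact goMap_window hdenN (hrec N N.lt_succ_self)

noncomputable def goOrbit (a b c d : ℝ) : ℕ → ℝ
  | 0 => a
  | 1 => b
  | 2 => c
  | 3 => d
  | 4 => (c + a * d - 1) / (a * c - b)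
  | 5 => (b * c - b * d - a * c + a * c * d + a * b * d) / ((a * c - b) * (b * d - c))
  | 6 => (b + a * d - 1) / (b * d - c)
  | n + 7 => goOrbit a b c d n

theorem goOrbit_recurrence {a b c d : ℝ} (h₀ : a * c - b ≠ 0) (h₁ : b * d - c ≠ 0) (n : ℕ) :
    goOrbit a b c d (n + 4) * (goOrbit a b c d n * goOrbit a b c d (n + 2) - goOrbit a b c d (n + 1))
      = goOrbit a b c d (n + 2) + goOrbit a b c d n * goOrbit a b c d (n + 3) - 1 := by
  -- `field_simp` looks for the nonvanishing of the denominators in its own normal form.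
  have h₀' : c * a - b ≠ 0 := by rwa [mul_comm]
  have h₁' : d * b - c ≠ 0 := by rwa [mul_comm]
  induction n using Nat.strong_induction_on with
  | _ n ih =>
  obtain hn | hn := lt_or_ge n 7
  · interval_cases n <;> simp only [goOrbit] <;> field_simp <;> ring
  · obtain ⟨m, rfl⟩ := Nat.exists_eq_add_of_le' hn
    simpa only [add_right_comm m 7, goOrbit] using ih m (by omega)

/-- The rational map `G_o` is 7-periodic wherever all iterates are defined. -/
theorem stmt5 (p : ℝ × ℝ × ℝ × ℝ)
    (hdef : ∀ m < 7,
      (goMap^[m] p).1 * (goMap^[m] p).2.2.1 - (goMap^[m] p).2.1 ≠ 0) :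
    goMap^[7] p = p := by
  obtain ⟨a, b, c, d⟩ := p
  have hwindow : window (goOrbit a b c d) 0 = (a, b, c, d) := rfl
  have h₀ : a * c - b ≠ 0 := hdef 0 (by norm_num)
  have h₁ : b * d - c ≠ 0 := hdef 1 (by norm_num)
  rw [← hwindow, iterate_goMap_window (fun n _ ↦ goOrbit_recurrence h₀ h₁ n) (hwindow ▸ hdef)]
  rfl
end

section
/- Suppose the system of equations t_i t_{i+1} ⋯ t_{i+k} = |Ṽ_i, Ṽ_{i+1}, ..., Ṽ_{i+k}|^{-1}, i ∈ Z/nZ, in positive unknowns t_1,...,t_n (indices mod n) is considered, where all the determinants |Ṽ_i,...,Ṽ_{i+k}| are positive. If gcd(n, k+1) = 1, then this system has a unique solution in positive reals. -/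
/-!
Taking logarithms turns the system into `S x = log c` for the circulant map
`(S x) i = x i + x (i + 1) + ⋯ + x (i + k)` on `ℝ^(ℤ/nℤ)`, so it suffices that `S` is injective.
If `S x = 0`, comparing the two ways of splitting a window of length `k + 2` shows that `x` is
`(k + 1)`-periodic; as `k + 1` is a unit of `ℤ/nℤ`, `x` is constant, and then `(k + 1) • x 0 = 0`
forces `x = 0`.
-/

open Finset Function

namespace ZMod

variable {n : ℕ}

theorem eq_apply_zero_of_periodic {β : Type*} {f : ZMod n → β} {c : ZMod n}
    (hf : Periodic f c) (hc : IsUnit c) (i : ZMod n) : f i = f 0 := by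
  obtain ⟨u, rfl⟩ := hc
  have h := hf.zsmul (i * ↑u⁻¹ : ZMod n).cast 0
  rwa [zsmul_eq_mul, intCast_zmod_cast, Units.inv_mul_cancel_right, zero_add] at h

variable {M : Type*} [AddCommMonoid M] {k : ℕ} {x : ZMod n → M}

theorem periodic_of_window_sum_eq_zero (hx : ∀ i, ∑ j ∈ range (k + 1), x (i + j) = 0) :
    Periodic x (k + 1 : ℕ) := by
  intro i
  calc x (i + (k + 1 : ℕ))
      = ∑ j ∈ range (k + 2), x (i + j) := by rw [sum_range_succ, hx, zero_add]
    _ = x i := by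
      have h : ∑ j ∈ range (k + 1), x (i + (j + 1 : ℕ)) = 0 := by
        simpa [add_assoc, add_comm (1 : ZMod n)] using hx (i + 1)
      rw [sum_range_succ', h, Nat.cast_zero, add_zero, zero_add]

theorem eq_zero_of_window_sum_eq_zero [IsAddTorsionFree M] (hgcd : Nat.gcd n (k + 1) = 1)
    (hx : ∀ i, ∑ j ∈ range (k + 1), x (i + j) = 0) : x = 0 := by
  have hconst : ∀ i, x i = x 0 := eq_apply_zero_of_periodic
    (periodic_of_window_sum_eq_zero hx) ((isUnit_iff_coprime _ _).mpr (Nat.coprime_comm.mp hgcd))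
  have h0 : (k + 1) • x 0 = 0 := by simpa [hconst] using hx 0
  funext i
  rw [hconst, (nsmul_eq_zero_iff_right k.succ_ne_zero).mp h0, Pi.zero_apply]

end ZMod

section windowSum

variable (K : Type*) [Field K] (n k : ℕ)

def windowSum : (ZMod n → K) →ₗ[K] (ZMod n → K) where
  toFun x i := ∑ j ∈ range (k + 1), x (i + j)
  map_add' x y := by funext i; simp [sum_add_distrib]
  map_smul' r x := by funext i; simp [mul_sum]

variable {K n k}

theorem windowSum_injective [CharZero K] (hgcd : Nat.gcd n (k + 1) = 1) :
    Injective (windowSum K n k) := by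
  rw [← LinearMap.ker_eq_bot, LinearMap.ker_eq_bot']
  exact fun x hx => ZMod.eq_zero_of_window_sum_eq_zero hgcd (congrFun hx)

theorem windowSum_bijective [CharZero K] [NeZero n] (hgcd : Nat.gcd n (k + 1) = 1) :
    Bijective (windowSum K n k) :=
  have hinj := windowSum_injective hgcd
  ⟨hinj, LinearMap.injective_iff_surjective.mp hinj⟩

end windowSum

theorem windowSum_log {n k : ℕ} {t : ZMod n → ℝ} (ht : ∀ i, 0 < t i) (i : ZMod n) :
    windowSum ℝ n k (Real.log ∘ t) i = Real.log (∏ j ∈ range (k + 1), t (i + j)) :=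
  (Real.log_prod (s := range (k + 1)) fun j _ => (ht (i + j)).ne').symm

/-- Given positive reals `c i` (`i ∈ ℤ/nℤ`), if `gcd(n, k+1) = 1` then the
system `t_i t_{i+1} ⋯ t_{i+k} = c i` has a unique solution in positive reals. -/
theorem stmt9 (n k : ℕ) (hn : 0 < n) (c : ZMod n → ℝ) (hc : ∀ i, 0 < c i)
    (hgcd : Nat.gcd n (k + 1) = 1) :
    ∃! t : ZMod n → ℝ, (∀ i, 0 < t i) ∧
      ∀ i : ZMod n, ∏ j ∈ Finset.range (k + 1), t (i + (j : ZMod n)) = c i := by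
  have : NeZero n := ⟨hn.ne'⟩
  obtain ⟨x, hx, hx_unique⟩ := (windowSum_bijective (K := ℝ) hgcd).existsUnique (Real.log ∘ c)
  refine ⟨Real.exp ∘ x, ⟨fun i => Real.exp_pos _, fun i => ?_⟩, ?_⟩
  · simp only [comp_apply, ← Real.exp_sum]
    rw [← Real.exp_log (hc i)]
    exact congrArg Real.exp (congrFun hx i)
  · rintro t ⟨ht, htc⟩
    have hlog : Real.log ∘ t = x :=
      hx_unique _ (funext fun i => by rw [windowSum_log ht, htc, comp_apply])
    funext i
    rw [← hlog, comp_apply, comp_apply, Real.exp_log (ht i)]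
end

section
/- Let x be an n×n upper unitriangular real matrix and x^ι = D x^{-1} D with D = diag(1,-1,...,(-1)^{n-1}). Then for i < j, the (i,j)-entry of x^ι equals the minor of x taken over rows {i, i+1, ..., j-1} and columns {i+1, i+2, ..., j}. -/
/-- `x` is upper unitriangular: ones on the diagonal, zeros below. -/
def IsUpperUnitriangular {n : ℕ} (x : Matrix (Fin n) (Fin n) ℝ) : Prop :=
  (∀ i, x i i = 1) ∧ ∀ i j : Fin n, j < i → x i j = 0

/-- The diagonal matrix `D = diag(1, -1, …, (-1)^{n-1})`. -/
def galD (n : ℕ) : Matrix (Fin n) (Fin n) ℝ :=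
  Matrix.diagonal fun i => (-1) ^ (i : ℕ)

/-- The map `x ↦ x^ι = D x⁻¹ D`. -/
noncomputable def iotaBFZ {n : ℕ} (x : Matrix (Fin n) (Fin n) ℝ) :
    Matrix (Fin n) (Fin n) ℝ :=
  galD n * x⁻¹ * galD n

/-!
Since `det x = 1`, the inverse `x⁻¹` is the adjugate, so conjugating by `D` cancels the cofactor
sign and `(x^ι)ᵢⱼ` is the minor of `x` with row `j` and column `i` deleted. In that minor the
rows and columns outside the window `[i, j)` still see an upper unitriangular pattern, so it is
block upper triangular with unitriangular outer blocks, and its determinant is that of the window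
block: rows `i, …, j-1` and columns `i+1, …, j` of `x`.
-/

lemma Fin.val_succAbove {n : ℕ} (p : Fin (n + 1)) (k : Fin n) :
    (p.succAbove k : ℕ) = if (k : ℕ) < p then (k : ℕ) else (k : ℕ) + 1 := by
  unfold Fin.succAbove
  split_ifs <;> simp_all [Fin.lt_def]

section IntervalBlock

variable {m : ℕ}

def intervalBlock (a b : ℕ) (k : Fin m) : Fin 3 :=
  if (k : ℕ) < a then 0 else if (k : ℕ) < b then 1 else 2

variable {a b : ℕ}

lemma intervalBlock_eq_one_iff {k : Fin m} :
    intervalBlock a b k = 1 ↔ a ≤ k ∧ (k : ℕ) < b := by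
  unfold intervalBlock
  split_ifs <;> simp <;> omega

lemma lt_and_of_intervalBlock_lt {r c : Fin m} (h : intervalBlock a b c < intervalBlock a b r) :
    c < r ∧ ((c : ℕ) < a ∨ b ≤ r) := by
  unfold intervalBlock at h
  rw [Fin.lt_def]
  split_ifs at h <;> simp at h <;> omega

lemma lt_or_le_of_intervalBlock_eq_ne_one {p q : Fin m}
    (hpq : intervalBlock a b p = intervalBlock a b q) (hq : intervalBlock a b q ≠ 1) :
    (q : ℕ) < a ∨ b ≤ p := by
  unfold intervalBlock at hpq hq
  split_ifs at hpq hq <;> simp at hpq hq ⊢ <;> omega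

def intervalBlockEquiv (hb : b ≤ m) : Fin (b - a) ≃ {k : Fin m // intervalBlock a b k = 1} where
  toFun r := ⟨⟨a + r, by omega⟩, intervalBlock_eq_one_iff.2 ⟨by simp, by simp; omega⟩⟩
  invFun k := ⟨k.1 - a, by have := intervalBlock_eq_one_iff.1 k.2; omega⟩
  left_inv r := by ext; simp
  right_inv k := by
    have := intervalBlock_eq_one_iff.1 k.2
    ext; simp; omega

end IntervalBlock

namespace Matrix

variable {R : Type*} [CommRing R] {m : ℕ}

def icoBlock (M : Matrix (Fin m) (Fin m) R) (a : ℕ) {b : ℕ} (hb : b ≤ m) :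
    Matrix (Fin (b - a)) (Fin (b - a)) R :=
  of fun r c => M ⟨a + r, by omega⟩ ⟨a + c, by omega⟩

theorem det_eq_det_icoBlock (M : Matrix (Fin m) (Fin m) R) {a b : ℕ} (hb : b ≤ m)
    (hzero : ∀ r c : Fin m, c < r → ((c : ℕ) < a ∨ b ≤ (r : ℕ)) → M r c = 0)
    (hone : ∀ k : Fin m, ((k : ℕ) < a ∨ b ≤ (k : ℕ)) → M k k = 1) :
    M.det = (M.icoBlock a hb).det := by
  have hM : M.BlockTriangular (intervalBlock a b) := fun r c h =>
    hzero r c (lt_and_of_intervalBlock_lt h).1 (lt_and_of_intervalBlock_lt h).2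
  rw [hM.det_fintype, Fintype.prod_eq_single 1,
    ← det_submatrix_equiv_self (intervalBlockEquiv hb)]
  · rfl
  intro v hv
  rw [det_of_isUpperTriangular]
  · exact Finset.prod_eq_one fun p _ =>
      hone p (lt_or_le_of_intervalBlock_eq_ne_one rfl (p.2.symm ▸ hv))
  · intro p q hqp
    exact hzero p q hqp (lt_or_le_of_intervalBlock_eq_ne_one (p.2.trans q.2.symm) (q.2.symm ▸ hv))

end Matrix

lemma IsUpperUnitriangular.det_eq_one {n : ℕ} {x : Matrix (Fin n) (Fin n) ℝ}
    (hx : IsUpperUnitriangular x) : x.det = 1 := by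
  rw [Matrix.det_of_isUpperTriangular hx.2]
  simp [hx.1]

lemma IsUpperUnitriangular.det_submatrix_succAbove_succAbove {m : ℕ}
    {x : Matrix (Fin (m + 1)) (Fin (m + 1)) ℝ} (hx : IsUpperUnitriangular x)
    {i j : Fin (m + 1)} (h : i < j) :
    (x.submatrix j.succAbove i.succAbove).det =
      Matrix.det (Matrix.of fun r c : Fin (j.val - i.val) =>
        x ⟨i.val + r.val, by omega⟩ ⟨i.val + 1 + c.val, by omega⟩) := by
  rw [Fin.lt_def] at h
  rw [Matrix.det_eq_det_icoBlock _ (Nat.le_of_lt_succ j.isLt)]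
  · congr 1
    ext r c
    simp only [Matrix.icoBlock, Matrix.submatrix_apply, Matrix.of_apply]
    congr 1 <;> ext <;> simp only [Fin.val_succAbove] <;> split_ifs <;> omega
  · intro r c hcr hout
    apply hx.2
    rw [Fin.lt_def] at hcr ⊢
    simp only [Fin.val_succAbove]
    split_ifs <;> omega
  · intro k hout
    have hk : j.succAbove k = i.succAbove k := by
      ext
      simp only [Fin.val_succAbove]
      split_ifs <;> omega
    rw [Matrix.submatrix_apply, hk, hx.1]

lemma iotaBFZ_apply {n : ℕ} (x : Matrix (Fin n) (Fin n) ℝ) (i j : Fin n) :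
    iotaBFZ x i j = (-1) ^ (i + j : ℕ) * x⁻¹ i j := by
  rw [iotaBFZ, galD, Matrix.mul_diagonal, Matrix.diagonal_mul, pow_add]
  ring

/-- For upper unitriangular `x` and `i < j`, the `(i,j)`-entry of
`x^ι = D x⁻¹ D` equals the connected minor of `x` on rows `{i,…,j-1}` and
columns `{i+1,…,j}`. -/
theorem stmt11 (n : ℕ) (x : Matrix (Fin n) (Fin n) ℝ)
    (hx : IsUpperUnitriangular x) (i j : Fin n) (h : i < j) :
    iotaBFZ x i j =
      Matrix.det (Matrix.of fun r c : Fin (j.val - i.val) =>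
        x ⟨i.val + r.val, by have hr := r.isLt; have hj := j.isLt; omega⟩
          ⟨i.val + 1 + c.val, by have hc := c.isLt; have hj := j.isLt; omega⟩) := by
  obtain ⟨m, rfl⟩ := Nat.exists_eq_succ_of_ne_zero i.pos.ne'
  have hinv : x⁻¹ = x.adjugate := by
    rw [Matrix.inv_def, hx.det_eq_one, Ring.inverse_one, one_smul]
  rw [iotaBFZ_apply, hinv, Matrix.adjugate_fin_succ_eq_det_submatrix, ← mul_assoc, ← pow_add,
    add_comm (j : ℕ), Even.neg_one_pow ⟨_, rfl⟩, one_mul,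
    hx.det_submatrix_succAbove_succAbove h]
end

section
/- Define tridiagonal continuant determinants U(a_1,...,a_k) = det of the k×k tridiagonal matrix with diagonal entries a_1,...,a_k and all sub- and super-diagonal entries equal to 1 (with U of the empty list = 1). For a sequence (a_i) of reals, suppose U(a_i, a_{i+1}, ..., a_{i+n-3}) = 1 for all i. Then the sequence (a_i) is n-periodic: a_{i+n} = a_i for all i, provided consecutive continuants U(a_i,...,a_{i+n-4}) are nonzero. -/
/-!
In frieze language the continuants `contU a i k` are the rows of the frieze with quiddity
sequence `a`. The determinant identity for continuants turns a row of ones followed by a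
nonvanishing row into a row of zeros. Expanding that zero row from the right and from the
left expresses both `a (i + n)` and `a i` as the same continuant `contU a (i + 2) (n - 3)`.
-/

/-- The continuant `contU a i m = U(a_i, a_{i+1}, …, a_{i+m-1})`: the determinant of
the tridiagonal matrix with diagonal `a_i,…,a_{i+m-1}` and off-diagonal ones. -/
noncomputable def contU (a : ℤ → ℝ) (i : ℤ) : ℕ → ℝ
  | 0 => 1
  | 1 => a i
  | (m + 2) => a (i + (m : ℤ) + 1) * contU a i (m + 1) - contU a i m

section Continuant

variable (a : ℤ → ℝ)

lemma contU_succ_succ (i : ℤ) (m : ℕ) :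
    contU a i (m + 2) = a (i + (m : ℤ) + 1) * contU a i (m + 1) - contU a i m := rfl

lemma contU_succ_succ_left : ∀ (k : ℕ) (i : ℤ),
    contU a i (k + 2) = a i * contU a (i + 1) (k + 1) - contU a (i + 2) k
  | 0, i => by simp [contU, mul_comm]
  | 1, i => by simp only [contU]; push_cast; ring_nf
  | k + 2, i => by
    rw [contU_succ_succ a i (k + 2), contU_succ_succ_left (k + 1) i, contU_succ_succ_left k i,
      contU_succ_succ a (i + 1) (k + 1), contU_succ_succ a (i + 2) k]
    push_cast
    ring_nf

lemma contU_wronskian : ∀ (k : ℕ) (i : ℤ),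
    contU a i (k + 1) * contU a (i + 1) (k + 1) - contU a i (k + 2) * contU a (i + 1) k = 1
  | 0, i => by simp only [contU, Nat.cast_zero, add_zero]; ring
  | k + 1, i => by
    have h := contU_wronskian k i
    rw [contU_succ_succ a i (k + 1), contU_succ_succ a (i + 1) k,
      show i + 1 + (k : ℤ) + 1 = i + ((k + 1 : ℕ) : ℤ) + 1 by push_cast; ring]
    linear_combination h

end Continuant

section Frieze

variable {a : ℤ → ℝ} {m : ℕ}

lemma contU_succ_succ_eq_zero (h1 : ∀ i, contU a i (m + 1) = 1) (h2 : ∀ i, contU a i m ≠ 0)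
    (i : ℤ) : contU a i (m + 2) = 0 := by
  have h := contU_wronskian a m i
  rw [h1 i, h1 (i + 1)] at h
  have hprod : contU a i (m + 2) * contU a (i + 1) m = 0 := by linarith
  exact (mul_eq_zero.mp hprod).resolve_right (h2 (i + 1))

lemma periodic_of_contU_eq_one (h1 : ∀ i, contU a i (m + 1) = 1)
    (h2 : ∀ i, contU a i m ≠ 0) (i : ℤ) : a (i + (m + 3 : ℕ)) = a i := by
  have hzero := contU_succ_succ_eq_zero h1 h2
  have hright : a (i + 2 + m + 1) = contU a (i + 2) m := by
    have h := contU_succ_succ a (i + 2) m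
    rw [hzero, h1] at h
    linarith
  have hleft : a i = contU a (i + 2) m := by
    have h := contU_succ_succ_left a m i
    rw [hzero, h1] at h
    linarith
  rw [hleft, ← hright]
  congr 1
  push_cast
  ring

end Frieze

/-- If `U(a_i, …, a_{i+n-3}) = 1` for all `i`, and the continuants
`U(a_i, …, a_{i+n-4})` are nonzero, then the sequence `(a_i)` is `n`-periodic. -/
theorem stmt13 (a : ℤ → ℝ) (n : ℕ) (hn : 3 ≤ n)
    (h1 : ∀ i : ℤ, contU a i (n - 2) = 1)
    (h2 : ∀ i : ℤ, contU a i (n - 3) ≠ 0) :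
    ∀ i : ℤ, a (i + (n : ℤ)) = a i := by
  obtain ⟨m, rfl⟩ : ∃ m, n = m + 3 := ⟨n - 3, by omega⟩
  exact periodic_of_contU_eq_one (by simpa using h1) (by simpa using h2)
end

section
/- Let (a_i), (b_i) be 5-periodic real sequences such that every solution of the third-order equation V_i = a_i V_{i-1} - b_i V_{i-2} + V_{i-3} is 5-periodic (V_{i+5} = V_i). Then every solution of the second-order equation W_i = a_i W_{i-1} - W_{i-2} is 5-antiperiodic: W_{i+5} = -W_i. -/
/-!
Five-periodicity of every solution of the third-order equation says that its monodromy over any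
five consecutive steps is the identity. Evaluating this on the three basic initial windows at
every position gives `b i = a (i + 2)` and the frieze relations `a i * a (i + 1) = 1 + a (i + 3)`,
`a (i + 2) * a (i + 3) = 1 + a i`, which together make `a` itself 5-periodic. These are Coxeter's
conditions for a frieze of width 2 (Gauss's pentagramma mirificum), and under them the monodromy
of the Hill equation over five steps is `-1`, by a direct computation.
-/

theorem exists_orbit_of_perms {α : Type*} (e : ℤ → Equiv.Perm α) (i₀ : ℤ) (x₀ : α) :
    ∃ u : ℤ → α, u i₀ = x₀ ∧ ∀ i, u (i + 1) = e i (u i) := by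
  -- Carrying the time along with the state turns the time-dependent steps into a single
  -- permutation of `ℤ × α`, whose integer powers run the orbit both forwards and backwards.
  let σ : Equiv.Perm (ℤ × α) := Equiv.prodShear (Equiv.addRight 1) e
  have hσ : ∀ p, σ p = (p.1 + 1, e p.1 p.2) := fun _ => rfl
  have hpow : ∀ n : ℤ, σ ^ (n + 1) = σ * σ ^ n := fun n => by rw [add_comm, zpow_one_add]
  have htime : ∀ n : ℤ, ((σ ^ n) (i₀, x₀)).1 = i₀ + n := by
    intro n
    induction n using Int.induction_on with
    | zero => simp
    | succ n ih => rw [hpow, Equiv.Perm.mul_apply, hσ, ih, add_assoc]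
    | pred n ih =>
      rw [← sub_add_cancel (-(n : ℤ)) 1, hpow, Equiv.Perm.mul_apply, hσ] at ih
      linarith
  refine ⟨fun i => ((σ ^ (i - i₀)) (i₀, x₀)).2, by simp, fun i => ?_⟩
  change ((σ ^ (i + 1 - i₀)) _).2 = e i ((σ ^ (i - i₀)) _).2
  rw [add_sub_right_comm, hpow, Equiv.Perm.mul_apply, hσ, htime, add_sub_cancel]

variable {R : Type*} [CommRing R]

def IsThirdOrderSolution (a b V : ℤ → R) : Prop :=
  ∀ i, V i = a i * V (i - 1) - b i * V (i - 2) + V (i - 3)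

def IsHillSolution (a W : ℤ → R) : Prop :=
  ∀ i, W i = a i * W (i - 1) - W (i - 2)

def thirdOrderStep (a b : ℤ → R) (i : ℤ) : Equiv.Perm (R × R × R) where
  toFun t := (t.2.1, t.2.2, a i * t.2.2 - b i * t.2.1 + t.1)
  invFun t := (t.2.2 - a i * t.2.1 + b i * t.1, t.1, t.2.1)
  left_inv t := Prod.ext (by simp; ring) rfl
  right_inv t := by simp

theorem IsThirdOrderSolution.exists_eq (a b : ℤ → R) (s : ℤ) (x y z : R) :
    ∃ V, IsThirdOrderSolution a b V ∧ V (s - 3) = x ∧ V (s - 2) = y ∧ V (s - 1) = z := by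
  obtain ⟨u, hs, hu⟩ := exists_orbit_of_perms (thirdOrderStep a b) s (x, y, z)
  let V : ℤ → R := fun i => (u (i + 1)).2.2
  have hprev : ∀ i, u i = thirdOrderStep a b (i - 1) (u (i - 1)) := fun i => by
    rw [← hu, sub_add_cancel]
  have h₃ : ∀ i, (u i).2.2 = V (i - 1) := fun i => by
    show _ = (u (i - 1 + 1)).2.2
    rw [sub_add_cancel]
  have h₂ : ∀ i, (u i).2.1 = V (i - 2) := fun i => by
    rw [hprev]
    exact (h₃ _).trans (congrArg V (by ring))
  have h₁ : ∀ i, (u i).1 = V (i - 3) := fun i => by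
    rw [hprev]
    exact (h₂ _).trans (congrArg V (by ring))
  refine ⟨V, fun i => ?_, by rw [← h₁, hs], by rw [← h₂, hs], by rw [← h₃, hs]⟩
  rw [← h₁, ← h₂, ← h₃]
  exact congrArg (fun t => t.2.2) (hu i)

def HasPeriodicSolutions (a b : ℤ → R) : Prop :=
  ∀ V, IsThirdOrderSolution a b V → Function.Periodic V 5

namespace HasPeriodicSolutions

variable {a b : ℤ → R}

theorem return_eq (hV : HasPeriodicSolutions a b) (i : ℤ) (x y z : R) :
    a (i + 2) * (a (i + 1) * (a i * z - b i * y + x) - b (i + 1) * z + y)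
      - b (i + 2) * (a i * z - b i * y + x) + z = x := by
  obtain ⟨V, hsol, hx, hy, hz⟩ := IsThirdOrderSolution.exists_eq a b i x y z
  have h₀ := hsol i
  have h₁ := hsol (i + 1)
  have h₂ := hsol (i + 2)
  have hper := hV V hsol (i - 3)
  simp only [add_sub_assoc, Int.reduceSub, add_zero, ← sub_eq_add_neg] at h₁ h₂
  simp only [sub_add, Int.reduceSub, sub_neg_eq_add] at hper
  simp only [hx, hy, hz] at h₀ h₁ h₂ hper
  linear_combination hper - h₂ - a (i + 2) * h₁ + (b (i + 2) - a (i + 2) * a (i + 1)) * h₀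

theorem b_eq (hV : HasPeriodicSolutions a b) (i : ℤ) : b i = a (i + 2) := by
  linear_combination -hV.return_eq i 0 1 0 - b i * hV.return_eq i 1 0 0

theorem mul_sub_eq_one (hV : HasPeriodicSolutions a b) (i : ℤ) :
    a (i + 1) * a (i + 2) - b (i + 2) = 1 := by
  linear_combination hV.return_eq i 1 0 0

theorem mul_eq_one_add (hV : HasPeriodicSolutions a b) (i : ℤ) :
    a i * a (i + 1) = 1 + a (i + 3) := by
  have h := hV.mul_sub_eq_one (i - 1)
  have hb := hV.b_eq (i + 1)
  rw [sub_add_cancel, show i - 1 + 2 = i + 1 by ring] at h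
  rw [show i + 1 + 2 = i + 3 by ring] at hb
  linear_combination h + hb

theorem mul_eq_one_add' (hV : HasPeriodicSolutions a b) (i : ℤ) :
    a (i + 2) * a (i + 3) = 1 + a i := by
  have hb := hV.b_eq (i + 1)
  rw [show i + 1 + 2 = i + 3 by ring] at hb
  linear_combination -hV.return_eq i 0 0 1 + a i * hV.mul_sub_eq_one i - a (i + 2) * hb

theorem periodic (hV : HasPeriodicSolutions a b) : Function.Periodic a 5 := fun i => by
  have h := hV.mul_eq_one_add (i + 2)
  rw [show i + 2 + 1 = i + 3 by ring, show i + 2 + 3 = i + 5 by ring] at h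
  linear_combination hV.mul_eq_one_add' i - h

end HasPeriodicSolutions

theorem IsHillSolution.antiperiodic {a W : ℤ → R} (hper : Function.Periodic a 5)
    (hfr : ∀ i, a i * a (i + 1) = 1 + a (i + 3)) (hW : IsHillSolution a W) :
    Function.Antiperiodic W 5 := fun i => by
  have w₂ := hW (i + 2)
  have w₃ := hW (i + 3)
  have w₄ := hW (i + 4)
  have w₅ := hW (i + 5)
  have q₀ := hfr i
  have q₁ := hfr (i + 1)
  have q₂ := hfr (i + 2)
  simp only [add_assoc, Int.reduceAdd, add_sub_assoc, Int.reduceSub, add_zero] at w₂ w₃ w₄ w₅ q₁ q₂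
  rw [hper] at w₅ q₂
  linear_combination w₅ + a i * w₄ + (a i * a (i + 4) - 1) * w₃
    + (a (i + 3) * (a i * a (i + 4) - 1) - a i) * w₂
    + (a i * a (i + 2) * W (i + 1) - a (i + 2) * a (i + 3) * W i) * q₀
    + (a i * a (i + 3) * W i - a i * a i * W (i + 1)) * q₁
    + ((a i + a i * a (i + 4) - 1) * W (i + 1) - (1 + a (i + 3)) * W i) * q₂

theorem stmt16_general (a b : ℤ → ℝ)
    (hV : ∀ V : ℤ → ℝ,
      (∀ i : ℤ, V i = a i * V (i - 1) - b i * V (i - 2) + V (i - 3)) →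
      ∀ i : ℤ, V (i + 5) = V i) :
    ∀ W : ℤ → ℝ, (∀ i : ℤ, W i = a i * W (i - 1) - W (i - 2)) →
      ∀ i : ℤ, W (i + 5) = -W i :=
  have hV : HasPeriodicSolutions a b := hV
  fun _ hW => IsHillSolution.antiperiodic hV.periodic hV.mul_eq_one_add hW

/-- If `(a_i)`, `(b_i)` are 5-periodic and every solution of
`V i = a i V_{i-1} - b i V_{i-2} + V_{i-3}` is 5-periodic, then every solution of
`W i = a i W_{i-1} - W_{i-2}` is 5-antiperiodic. -/
theorem stmt16 (a b : ℤ → ℝ)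
    (hpa : ∀ i : ℤ, a (i + 5) = a i) (hpb : ∀ i : ℤ, b (i + 5) = b i)
    (hV : ∀ V : ℤ → ℝ,
      (∀ i : ℤ, V i = a i * V (i - 1) - b i * V (i - 2) + V (i - 3)) →
      ∀ i : ℤ, V (i + 5) = V i) :
    ∀ W : ℤ → ℝ, (∀ i : ℤ, W i = a i * W (i - 1) - W (i - 2)) →
      ∀ i : ℤ, W (i + 5) = -W i :=
  stmt16_general a b hV
end

section
/- Let n = k+3 and suppose (a_i^j) are n-periodic coefficients such that every solution of V_i = a_i^1 V_{i-1} - a_i^2 V_{i-2} + ... + (-1)^k V_{i-k-1} satisfies V_{i+n} = (-1)^k V_i. Then every solution of the Hill equation W_i = a_i^1 W_{i-1} - W_{i-2} (using only the first coefficients) satisfies W_{i+n} = -W_i. -/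
namespace Stmt17Aux

noncomputable def bb (k : ℕ) (a : ℤ → ℕ → ℝ) (m : ℤ) (j : ℕ) : ℝ :=
  if j = 0 then 1 else if j ≤ k then a m j else if j = k + 1 then 1 else 0

noncomputable def Kc (a : ℤ → ℕ → ℝ) : ℕ → ℤ → ℝ
  | 0, _ => 1
  | 1, m => a m 1
  | j + 2, m => a m 1 * Kc a (j + 1) (m - 1) - Kc a j (m - 2)

noncomputable def fwdF (k : ℕ) (a : ℤ → ℕ → ℝ) (m : ℤ) (v : ℕ → ℝ) : ℕ → ℕ → ℝ
  | 0 => v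
  | r + 1 => fun j => if j = 0 then
      ∑ l ∈ Finset.Icc 1 (k+1), (-1:ℝ)^(l-1) * bb k a (m + r) l * fwdF k a m v r (l-1)
    else fwdF k a m v r (j-1)

noncomputable def bwdF (k : ℕ) (a : ℤ → ℕ → ℝ) (m : ℤ) (v : ℕ → ℝ) : ℕ → ℕ → ℝ
  | 0 => v
  | s + 1 => fun j => if j = k then
      (-1:ℝ)^k * (bwdF k a m v s 0 -
        ∑ l ∈ Finset.Icc 1 k, (-1:ℝ)^(l-1) * bb k a (m - 1 - s) l * bwdF k a m v s l)
    else bwdF k a m v s (j+1)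

noncomputable def solF (k : ℕ) (a : ℤ → ℕ → ℝ) (m : ℤ) (v : ℕ → ℝ) (p : ℤ) : ℝ :=
  if m - 1 ≤ p then fwdF k a m v (p - (m-1)).toNat 0 else bwdF k a m v (m - 1 - p).toNat 0

variable {k : ℕ} {a : ℤ → ℕ → ℝ} {m : ℤ} {v : ℕ → ℝ}

lemma bwdF_shift : ∀ j, j ≤ k → ∀ s, bwdF k a m v s j = bwdF k a m v (s + j) 0 := by
  intro j
  induction j with
  | zero => intro _ s; rfl
  | succ j ih =>
    intro hj s
    have h1 : bwdF k a m v (s+1) j = bwdF k a m v s (j+1) := by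
      show (if j = k then _ else bwdF k a m v s (j+1)) = _
      rw [if_neg (by omega)]
    rw [← h1, ih (by omega) (s+1)]
    congr 1
    omega

lemma solF_bwd : ∀ s j, j ≤ k → bwdF k a m v s j = solF k a m v (m - 1 - s - j) := by
  intro s j hj
  rw [bwdF_shift j hj s]
  unfold solF
  rcases Nat.eq_zero_or_pos (s + j) with h0 | hpos
  · obtain ⟨hs, hj0⟩ : s = 0 ∧ j = 0 := by omega
    subst hs; subst hj0
    rw [if_pos (by omega)]
    norm_num
    rfl
  · rw [if_neg (by omega)]
    congr 1
    omega

lemma solF_fwd : ∀ r j, j ≤ k → fwdF k a m v r j = solF k a m v (m - 1 + r - j) := by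
  intro r
  induction r with
  | zero =>
    intro j hj
    have h := solF_bwd (k := k) (a := a) (m := m) (v := v) 0 j hj
    rw [show m - 1 + ((0:ℕ):ℤ) - j = m - 1 - ((0:ℕ):ℤ) - j by push_cast; ring]
    exact h
  | succ r ih =>
    intro j hj
    match j with
    | 0 =>
      show fwdF k a m v (r+1) 0 = solF k a m v (m - 1 + (r+1:ℕ) - 0)
      unfold solF
      rw [if_pos (by push_cast; omega)]
      congr 1
      omega
    | j + 1 =>
      show fwdF k a m v r j = _
      rw [ih j (by omega)]
      congr 1
      push_cast
      ring

lemma neg_one_pow_sq : ((-1:ℝ)^k) * ((-1:ℝ)^k) = 1 := by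
  rw [← pow_add]
  exact Even.neg_one_pow ⟨k, rfl⟩

lemma solF_init (s : ℕ) (hs1 : 1 ≤ s) (hs2 : s ≤ k+1) :
    solF k a m v (m - s) = v (s-1) := by
  have h := solF_bwd (k := k) (a := a) (m := m) (v := v) 0 (s-1) (by omega)
  rw [show m - 1 - ((0:ℕ):ℤ) - ((s-1:ℕ):ℤ) = m - s by push_cast [hs1]; ring] at h
  exact h.symm

lemma solF_rec (hk : 1 ≤ k) (i : ℤ) :
    solF k a m v i =
      ∑ l ∈ Finset.Icc 1 (k+1), (-1:ℝ)^(l-1) * bb k a i l * solF k a m v (i - l) := by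
  rcases le_or_gt m i with hmi | him
  · set r : ℕ := (i - m).toNat with hr
    have hri : (r:ℤ) = i - m := by omega
    have h1 : solF k a m v i = fwdF k a m v (r+1) 0 := by
      unfold solF
      rw [if_pos (by omega)]
      congr 1
      omega
    rw [h1, show fwdF k a m v (r+1) 0 = ∑ l ∈ Finset.Icc 1 (k+1),
      (-1:ℝ)^(l-1) * bb k a (m + r) l * fwdF k a m v r (l-1) from by simp [fwdF]]
    apply Finset.sum_congr rfl
    intro l hl
    simp only [Finset.mem_Icc] at hl
    rw [solF_fwd r (l-1) (by omega)]
    rw [show m - 1 + (r:ℤ) - ((l-1:ℕ):ℤ) = i - l by omega,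
        show m + (r:ℤ) = i by omega]
  · set s : ℕ := (m - 1 - i).toNat with hs
    have hsi : (s:ℤ) = m - 1 - i := by omega
    have hb : bwdF k a m v (s+1) k = (-1:ℝ)^k * (bwdF k a m v s 0 -
        ∑ l ∈ Finset.Icc 1 k, (-1:ℝ)^(l-1) * bb k a (m - 1 - s) l * bwdF k a m v s l) := by
      simp [bwdF]
    rw [solF_bwd (s+1) k le_rfl] at hb
    rw [solF_bwd s 0 (by omega)] at hb
    have harg1 : m - 1 - ((s+1:ℕ):ℤ) - (k:ℤ) = i - ((k:ℤ)+1) := by push_cast; omega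
    have harg2 : m - 1 - (s:ℕ) - ((0:ℕ):ℤ) = i := by push_cast; omega
    have harg3 : m - 1 - ((s:ℕ):ℤ) = i := by omega
    rw [harg1, harg2, harg3] at hb
    have hb2 : ∀ l ∈ Finset.Icc 1 k, (-1:ℝ)^(l-1) * bb k a i l * bwdF k a m v s l
        = (-1:ℝ)^(l-1) * bb k a i l * solF k a m v (i - l) := by
      intro l hl
      simp only [Finset.mem_Icc] at hl
      rw [solF_bwd s l (by omega)]
      congr 2
      omega
    rw [Finset.sum_congr rfl hb2] at hb
    rw [Finset.sum_Icc_succ_top (by omega : 1 ≤ k+1)]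
    have hbbtop : bb k a i (k+1) = 1 := by
      unfold bb
      rw [if_neg (by omega), if_neg (by omega), if_pos rfl]
    rw [hbbtop, Nat.add_sub_cancel]
    have hR2 : (-1:ℝ)^k * solF k a m v (i - ((k:ℤ)+1)) =
        solF k a m v i
          - ∑ l ∈ Finset.Icc 1 k, (-1:ℝ)^(l-1) * bb k a i l * solF k a m v (i - l) := by
      rw [hb, ← mul_assoc, neg_one_pow_sq, one_mul]
    have : ((k+1:ℕ):ℤ) = (k:ℤ)+1 := by push_cast; ring
    rw [this]
    linarith [hR2]

lemma master (hk : 1 ≤ k)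
    (hconv : ∀ V : ℤ → ℝ,
      (∀ i, V i = ∑ l ∈ Finset.Icc 1 (k+1), (-1:ℝ)^(l-1) * bb k a i l * V (i - l)) →
      ∀ i : ℤ, V (i + ((k+3:ℕ):ℤ)) = (-1:ℝ)^k * V i)
    (t : ℕ) (ht1 : 1 ≤ t) (ht2 : t ≤ k+1) (m : ℤ) :
    (-1:ℝ)^k * (if t = k+1 then 1 else 0) =
      bb k a (m+2) 1 * (bb k a (m+1) 1 * ((-1:ℝ)^(t-1) * bb k a m t)
        + (-1:ℝ)^t * bb k a (m+1) (t+1))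
      - bb k a (m+2) 2 * ((-1:ℝ)^(t-1) * bb k a m t)
      + (-1:ℝ)^(t+1) * bb k a (m+2) (t+2) := by
  set v : ℕ → ℝ := fun j => if j = t-1 then 1 else 0 with hv
  set V : ℤ → ℝ := solF k a m v with hVdef
  have hrec : ∀ i, V i = ∑ l ∈ Finset.Icc 1 (k+1), (-1:ℝ)^(l-1) * bb k a i l * V (i - l) :=
    fun i => solF_rec hk i
  have hinit : ∀ s : ℕ, 1 ≤ s → s ≤ k+1 → V (m - (s:ℤ)) = if s = t then 1 else 0 := by
    intro s h1 h2
    show solF k a m v (m - s) = _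
    rw [solF_init s h1 h2]
    by_cases h : s = t
    · rw [if_pos h, hv]
      simp [h]
    · rw [if_neg h, hv]
      simp only []
      rw [if_neg (by omega)]
  have x0 : V m = (-1:ℝ)^(t-1) * bb k a m t := by
    rw [hrec m]
    rw [Finset.sum_eq_single_of_mem t (by simp [Finset.mem_Icc]; omega)]
    · rw [hinit t ht1 ht2, if_pos rfl, mul_one]
    · intro l hl hlt
      simp only [Finset.mem_Icc] at hl
      rw [hinit l hl.1 hl.2, if_neg hlt, mul_zero]
  have x1 : V (m+1) = bb k a (m+1) 1 * V m + (-1:ℝ)^t * bb k a (m+1) (t+1) := by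
    rw [hrec (m+1)]
    have hsplit : Finset.Icc 1 (k+1) = insert 1 (Finset.Icc 2 (k+1)) := by
      ext x; simp only [Finset.mem_Icc, Finset.mem_insert]; omega
    rw [hsplit, Finset.sum_insert (by simp [Finset.mem_Icc])]
    have hfirst : (-1:ℝ)^(1-1) * bb k a (m+1) 1 * V (m+1-((1:ℕ):ℤ)) = bb k a (m+1) 1 * V m := by
      norm_num
    rw [hfirst]
    have hzero : ∀ l ∈ Finset.Icc 2 (k+1), l ≠ t+1 →
        (-1:ℝ)^(l-1) * bb k a (m+1) l * V (m+1-(l:ℤ)) = 0 := by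
      intro l hl hlt
      simp only [Finset.mem_Icc] at hl
      rw [show m+1-(l:ℤ) = m - ((l-1:ℕ):ℤ) by omega]
      rw [hinit (l-1) (by omega) (by omega), if_neg (by omega), mul_zero]
    by_cases htk : t ≤ k
    · rw [Finset.sum_eq_single_of_mem (t+1) (by simp [Finset.mem_Icc]; omega)
        (fun l hl hlt => hzero l hl hlt)]
      rw [show m+1-((t+1:ℕ):ℤ) = m - ((t:ℕ):ℤ) by push_cast; ring]
      rw [hinit t ht1 ht2, if_pos rfl, mul_one, Nat.add_sub_cancel]
    · have ht : t = k+1 := by omega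
      rw [Finset.sum_eq_zero (fun l hl => hzero l hl
        (by simp only [Finset.mem_Icc] at hl; omega))]
      have hbz : bb k a (m+1) (t+1) = 0 := by
        unfold bb
        rw [if_neg (by omega), if_neg (by omega), if_neg (by omega)]
      rw [hbz]; ring
  have x2 : V (m+2) = bb k a (m+2) 1 * V (m+1) - bb k a (m+2) 2 * V m
      + (-1:ℝ)^(t+1) * bb k a (m+2) (t+2) := by
    rw [hrec (m+2)]
    have hsplit2 : Finset.Icc 1 (k+1) = insert 1 (insert 2 (Finset.Icc 3 (k+1))) := by
      ext x; simp only [Finset.mem_Icc, Finset.mem_insert]; omega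
    rw [hsplit2, Finset.sum_insert (by simp [Finset.mem_Icc]),
        Finset.sum_insert (by simp [Finset.mem_Icc])]
    have hfirst : (-1:ℝ)^(1-1) * bb k a (m+2) 1 * V (m+2-((1:ℕ):ℤ))
        = bb k a (m+2) 1 * V (m+1) := by
      rw [show m+2-((1:ℕ):ℤ) = m+1 by push_cast; ring]
      norm_num
    have hsecond : (-1:ℝ)^(2-1) * bb k a (m+2) 2 * V (m+2-((2:ℕ):ℤ))
        = -(bb k a (m+2) 2 * V m) := by
      rw [show m+2-((2:ℕ):ℤ) = m by push_cast; ring]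
      norm_num
    rw [hfirst, hsecond]
    have hzero : ∀ l ∈ Finset.Icc 3 (k+1), l ≠ t+2 →
        (-1:ℝ)^(l-1) * bb k a (m+2) l * V (m+2-(l:ℤ)) = 0 := by
      intro l hl hlt
      simp only [Finset.mem_Icc] at hl
      rw [show m+2-(l:ℤ) = m - ((l-2:ℕ):ℤ) by omega]
      rw [hinit (l-2) (by omega) (by omega), if_neg (by omega), mul_zero]
    by_cases htk : t+2 ≤ k+1
    · rw [Finset.sum_eq_single_of_mem (t+2) (by simp [Finset.mem_Icc]; omega)
        (fun l hl hlt => hzero l hl hlt)]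
      rw [show m+2-((t+2:ℕ):ℤ) = m - ((t:ℕ):ℤ) by push_cast; ring]
      rw [hinit t ht1 ht2, if_pos rfl, mul_one, show t+2-1 = t+1 by omega]
      ring
    · rw [Finset.sum_eq_zero (fun l hl => hzero l hl
        (by simp only [Finset.mem_Icc] at hl; omega))]
      have hbz : bb k a (m+2) (t+2) = 0 := by
        unfold bb
        rw [if_neg (by omega), if_neg (by omega), if_neg (by omega)]
      rw [hbz]; ring
  have hanti : V (m+2) = (-1:ℝ)^k * (if t = k+1 then 1 else 0) := by
    have h := hconv V hrec (m - ((k+1:ℕ):ℤ))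
    rw [show m - ((k+1:ℕ):ℤ) + ((k+3:ℕ):ℤ) = m + 2 by push_cast; ring] at h
    rw [h, hinit (k+1) (by omega) le_rfl]
    congr 1
    by_cases hh : t = k+1 <;> simp [hh]
    omega
  exact hanti.symm.trans (by rw [x2, x1, x0])

lemma R2 (hk : 1 ≤ k)
    (hconv : ∀ V : ℤ → ℝ,
      (∀ i, V i = ∑ l ∈ Finset.Icc 1 (k+1), (-1:ℝ)^(l-1) * bb k a i l * V (i - l)) →
      ∀ i : ℤ, V (i + ((k+3:ℕ):ℤ)) = (-1:ℝ)^k * V i) (m : ℤ) :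
    bb k a (m+2) 2 = bb k a (m+2) 1 * bb k a (m+1) 1 - 1 := by
  have h := master hk hconv (k+1) (by omega) le_rfl m
  rw [if_pos rfl] at h
  rw [show bb k a m (k+1) = 1 from by
        unfold bb; rw [if_neg (by omega), if_neg (by omega), if_pos rfl]] at h
  rw [show bb k a (m+1) (k+1+1) = 0 from by
        unfold bb; rw [if_neg (by omega), if_neg (by omega), if_neg (by omega)]] at h
  rw [show bb k a (m+2) (k+1+2) = 0 from by
        unfold bb; rw [if_neg (by omega), if_neg (by omega), if_neg (by omega)]] at h
  rw [Nat.add_sub_cancel] at h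
  have hsq : (-1:ℝ)^k * (-1:ℝ)^k = 1 := by
    rw [← pow_add]; exact Even.neg_one_pow ⟨k, rfl⟩
  linear_combination ((-1:ℝ)^k) * h
    + (bb k a (m+2) 1 * bb k a (m+1) 1 - bb k a (m+2) 2 - 1) * hsq

lemma Rel0 (hk : 1 ≤ k)
    (hconv : ∀ V : ℤ → ℝ,
      (∀ i, V i = ∑ l ∈ Finset.Icc 1 (k+1), (-1:ℝ)^(l-1) * bb k a i l * V (i - l)) →
      ∀ i : ℤ, V (i + ((k+3:ℕ):ℤ)) = (-1:ℝ)^k * V i)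
    (t : ℕ) (ht : t ≤ k) (m : ℤ) :
    bb k a (m+2) (t+2) = bb k a (m+2) 1 * bb k a (m+1) (t+1) - bb k a m t := by
  rcases Nat.eq_zero_or_pos t with h0 | hpos
  · subst h0
    rw [show bb k a m 0 = 1 from by unfold bb; rw [if_pos rfl]]
    exact R2 hk hconv m
  · obtain ⟨u, hu⟩ : ∃ u, t = u + 1 := ⟨t - 1, by omega⟩
    subst hu
    have h := master hk hconv (u+1) (by omega) (by omega) m
    rw [if_neg (by omega)] at h
    rw [Nat.add_sub_cancel] at h
    have hR := R2 hk hconv m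
    have hsq : (-1:ℝ)^u * (-1:ℝ)^u = 1 := by
      rw [← pow_add]; exact Even.neg_one_pow ⟨u, rfl⟩
    rw [pow_succ, pow_succ, pow_succ] at h
    linear_combination (-(-1:ℝ)^u) * h
      + (-(bb k a (m+2) (u+1+2) - bb k a (m+2) 1 * bb k a (m+1) (u+1+1) + bb k a m (u+1))) * hsq
      + (bb k a m (u+1) * ((-1:ℝ)^u * (-1:ℝ)^u)) * hR

lemma KbEq (hk : 1 ≤ k)
    (hconv : ∀ V : ℤ → ℝ,
      (∀ i, V i = ∑ l ∈ Finset.Icc 1 (k+1), (-1:ℝ)^(l-1) * bb k a i l * V (i - l)) →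
      ∀ i : ℤ, V (i + ((k+3:ℕ):ℤ)) = (-1:ℝ)^k * V i) :
    ∀ j, ∀ m : ℤ, j ≤ k + 2 → bb k a m j = Kc a j m := by
  intro j
  induction j using Nat.strong_induction_on with
  | _ j ih =>
    match j with
    | 0 => intro m _; simp [bb, Kc]
    | 1 =>
      intro m _
      show bb k a m 1 = a m 1
      unfold bb
      rw [if_neg (by omega), if_pos hk]
    | t+2 =>
      intro m hj
      have h := Rel0 hk hconv t (by omega) (m-2)
      rw [show m-2+2 = m by ring, show m-2+1 = m-1 by ring] at h
      rw [h, show bb k a m 1 = a m 1 from by unfold bb; rw [if_neg (by omega), if_pos hk],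
          ih (t+1) (by omega) (m-1) (by omega), ih t (by omega) (m-2) (by omega)]
      simp [Kc]

theorem final (hk : 1 ≤ k)
    (hconv : ∀ V : ℤ → ℝ,
      (∀ i, V i = ∑ l ∈ Finset.Icc 1 (k+1), (-1:ℝ)^(l-1) * bb k a i l * V (i - l)) →
      ∀ i : ℤ, V (i + ((k+3:ℕ):ℤ)) = (-1:ℝ)^k * V i) :
    ∀ W : ℤ → ℝ, (∀ i : ℤ, W i = a i 1 * W (i - 1) - W (i - 2)) →
      ∀ i : ℤ, W (i + (k + 3 : ℕ)) = -W i := by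
  have hK1 : ∀ m : ℤ, Kc a (k+1) m = 1 := by
    intro m
    rw [← KbEq hk hconv (k+1) m (by omega)]
    unfold bb; rw [if_neg (by omega), if_neg (by omega), if_pos rfl]
  have hK2 : ∀ m : ℤ, Kc a (k+2) m = 0 := by
    intro m
    rw [← KbEq hk hconv (k+2) m le_rfl]
    unfold bb; rw [if_neg (by omega), if_neg (by omega), if_neg (by omega)]
  intro W hW
  have P : ∀ j : ℕ,
      (∀ i : ℤ, W (i + j + 1) = Kc a (j+1) (i + j + 1) * W i - Kc a j (i + j + 1) * W (i-1)) ∧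
      (∀ i : ℤ, W (i + j + 2) = Kc a (j+2) (i + j + 2) * W i - Kc a (j+1) (i + j + 2) * W (i-1)) := by
    intro j
    induction j with
    | zero =>
      constructor
      · intro i
        have h := hW (i + 1)
        rw [show i+1-1 = i by ring, show i+1-2 = i-1 by ring] at h
        push_cast
        rw [show i + (0:ℤ) + 1 = i + 1 by ring]
        simpa [Kc] using h
      · intro i
        have h2 := hW (i + 2)
        have h1 := hW (i + 1)
        rw [show i+2-1 = i+1 by ring, show i+2-2 = i by ring] at h2
        rw [show i+1-1 = i by ring, show i+1-2 = i-1 by ring] at h1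
        push_cast
        rw [show i + (0:ℤ) + 2 = i + 2 by ring]
        simp only [Kc]
        rw [show i+2-1 = i+1 by ring]
        linear_combination h2 + a (i+2) 1 * h1
    | succ j ih =>
      refine ⟨?_, ?_⟩
      · intro i
        have h := ih.2 i
        push_cast
        rw [show i + ((j:ℤ)+1) + 1 = i + j + 2 by ring]
        exact h
      · intro i
        have h := hW (i + j + 3)
        rw [show i + (j:ℤ) + 3 - 1 = i + j + 2 by ring,
            show i + (j:ℤ) + 3 - 2 = i + j + 1 by ring] at h
        have h2 := ih.2 i
        have h1 := ih.1 i
        push_cast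
        rw [show i + ((j:ℤ)+1) + 2 = i + j + 3 by ring]
        have e1 : Kc a (j+3) (i+(j:ℤ)+3)
            = a (i+(j:ℤ)+3) 1 * Kc a (j+2) (i+(j:ℤ)+2) - Kc a (j+1) (i+(j:ℤ)+1) := by
          show Kc a ((j+1)+2) _ = _
          simp only [Kc]
          rw [show i+(j:ℤ)+3-1 = i+j+2 by ring, show i+(j:ℤ)+3-2 = i+j+1 by ring]
        have e2 : Kc a (j+2) (i+(j:ℤ)+3)
            = a (i+(j:ℤ)+3) 1 * Kc a (j+1) (i+(j:ℤ)+2) - Kc a j (i+(j:ℤ)+1) := by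
          simp only [Kc]
          rw [show i+(j:ℤ)+3-1 = i+j+2 by ring, show i+(j:ℤ)+3-2 = i+j+1 by ring]
        rw [e1, e2]
        linear_combination h + a (i+(j:ℤ)+3) 1 * h2 - h1
  intro i
  have h := (P (k+1)).1 (i+1)
  simp only [show (k+1)+1 = k+2 from rfl] at h
  rw [hK2, hK1] at h
  rw [show i+1-1 = i by ring] at h
  push_cast at h ⊢
  rw [show i + ((k:ℤ) + 3) = i + 1 + ((k:ℤ)+1) + 1 by ring]
  rw [h]
  ring

end Stmt17Aux

/-- Let `n = k+3` and suppose the coefficients `a_i^j` are `n`-periodic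
and every solution of `V i = a_i^1 V_{i-1} - a_i^2 V_{i-2} + ⋯ + (-1)^k V_{i-k-1}`
satisfies `V (i+n) = (-1)^k V i`. Then every solution of the Hill equation
`W i = a_i^1 W_{i-1} - W_{i-2}` satisfies `W (i+n) = -W i`. -/
theorem stmt17 (k : ℕ) (hk : 1 ≤ k) (a : ℤ → ℕ → ℝ)
    (hper : ∀ (i : ℤ) (j : ℕ), a (i + (k + 3 : ℕ)) j = a i j)
    (hV : ∀ V : ℤ → ℝ,
      (∀ i : ℤ, V i =
        (∑ j ∈ Finset.Icc 1 k, (-1 : ℝ) ^ (j - 1) * a i j * V (i - (j : ℤ)))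
          + (-1 : ℝ) ^ k * V (i - (k + 1 : ℕ))) →
      ∀ i : ℤ, V (i + (k + 3 : ℕ)) = (-1 : ℝ) ^ k * V i) :
    ∀ W : ℤ → ℝ, (∀ i : ℤ, W i = a i 1 * W (i - 1) - W (i - 2)) →
      ∀ i : ℤ, W (i + (k + 3 : ℕ)) = -W i := by
  have hconv : ∀ V : ℤ → ℝ,
      (∀ i, V i = ∑ l ∈ Finset.Icc 1 (k+1),
        (-1:ℝ)^(l-1) * Stmt17Aux.bb k a i l * V (i - l)) →
      ∀ i : ℤ, V (i + ((k+3:ℕ):ℤ)) = (-1:ℝ)^k * V i := by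
    intro V h
    apply hV
    intro i
    have h2 := h i
    rw [Finset.sum_Icc_succ_top (by omega : 1 ≤ k+1)] at h2
    rw [Nat.add_sub_cancel] at h2
    rw [show Stmt17Aux.bb k a i (k+1) = 1 from by
        unfold Stmt17Aux.bb; rw [if_neg (by omega), if_neg (by omega), if_pos rfl],
      mul_one] at h2
    rw [h2]
    congr 1
    apply Finset.sum_congr rfl
    intro l hl
    simp only [Finset.mem_Icc] at hl
    rw [show Stmt17Aux.bb k a i l = a i l from by
        unfold Stmt17Aux.bb; rw [if_neg (by omega), if_pos hl.2]]
  exact Stmt17Aux.final hk hconv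
end

section
/- Suppose an infinite array (d_{i,j}) of reals with d_{i,i-1} = 1 for all i satisfies, for fixed n-periodic coefficients, that each South-East diagonal η_j = (d_{i,j})_i obeys η_j = a_j^1 η_{j-1} - a_j^2 η_{j-2} + ... + (-1)^k a_j^{k+1} η_{j-k-1}, and that every (k+1)×(k+1) determinant on consecutive rows and columns equals 1. Then a_j^{k+1} = 1 for all j. -/
/-!
Write `W(s)` for the block with columns `η_s, …, η_{s+k}`. The recurrence writes `η_{s+k+1}` as a
combination of the columns of `W(s)` whose coefficient on `η_s` is `(-1)^k a^{k+1}`, so replacing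
that column of `W(s)` by `η_{s+k+1}` multiplies the determinant by this coefficient. A cyclic
rotation of the columns, of sign `(-1)^k`, turns the result into `W(s+1)`. Hence
`det W(s+1) = a^{k+1} det W(s)`, and both determinants are `1`.
-/

open Matrix Finset

theorem sum_Icc_one_eq_sum_fin_rev {M : Type*} [AddCommMonoid M] (n : ℕ) (f : ℕ → M) :
    ∑ m ∈ Icc 1 n, f m = ∑ i : Fin n, f (n - i) := by
  rw [Fin.sum_univ_eq_sum_range (fun i => f (n - i))]
  refine sum_nbij' (fun m => n - m) (fun i => n - i) ?_ ?_ ?_ ?_ ?_ <;> intro m hm <;>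
    simp at hm ⊢ <;> first | omega | congr 1; omega

section colWindow

variable {R : Type*} {k : ℕ}

def colWindow (v : ℤ → Fin (k + 1) → R) (s : ℤ) : Matrix (Fin (k + 1)) (Fin (k + 1)) R :=
  Matrix.of fun r c => v (s + c) r

theorem colWindow_add_one (v : ℤ → Fin (k + 1) → R) (s : ℤ) :
    colWindow v (s + 1) =
      ((colWindow v s).updateCol 0 (v (s + (k + 1)))).submatrix id (finRotate (k + 1)) := by
  ext r c
  by_cases hc : c = Fin.last k
  · subst hc
    simp [colWindow, add_assoc, add_comm (1 : ℤ)]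
  · have hc0 : finRotate (k + 1) c ≠ 0 := by
      rw [← finRotate_last]
      exact (finRotate _).injective.ne hc
    simp only [colWindow, submatrix_apply, id_eq, updateCol_ne hc0, of_apply,
      coe_finRotate_of_ne_last hc]
    push_cast
    ring_nf

theorem det_colWindow_add_one [CommRing R] (v : ℤ → Fin (k + 1) → R) (s : ℤ)
    (b : Fin (k + 1) → R) (hv : v (s + (k + 1)) = ∑ i, b i • v (s + i)) :
    (colWindow v (s + 1)).det = (-1) ^ k * b 0 * (colWindow v s).det := by
  have hcol : v (s + (k + 1)) = fun r => ∑ i, b i • colWindow v s r i := by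
    rw [hv]
    ext r
    simp [colWindow]
  rw [colWindow_add_one, det_permute', sign_finRotate, hcol, det_updateCol_sum]
  simp [mul_assoc]

end colWindow

theorem stmt19_general (k : ℕ) (a : ℤ → ℕ → ℝ) (d : ℤ → ℤ → ℝ)
    (hrec : ∀ i j : ℤ, d i j =
      ∑ m ∈ Finset.Icc 1 (k + 1), (-1 : ℝ) ^ (m - 1) * a j m * d i (j - (m : ℤ)))
    (hdet : ∀ i j : ℤ,
      (Matrix.of fun r c : Fin (k + 1) =>
        d (i + (r.val : ℤ)) (j + (c.val : ℤ))).det = 1) :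
    ∀ j : ℤ, a j (k + 1) = 1 := by
  intro j
  set s := j - (k + 1)
  let η : ℤ → Fin (k + 1) → ℝ := fun j r => d (0 + r) j
  have hη : η (s + (k + 1)) = ∑ i : Fin (k + 1),
      ((-1 : ℝ) ^ (k + 1 - i - 1) * a j (k + 1 - i)) • η (s + i) := by
    ext r
    simp only [s, η, sub_add_cancel, Finset.sum_apply, Pi.smul_apply, smul_eq_mul]
    rw [hrec, sum_Icc_one_eq_sum_fin_rev]
    refine sum_congr rfl fun i _ => ?_
    rw [Nat.cast_sub (by omega : (i : ℕ) ≤ k + 1)]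
    push_cast
    ring_nf
  have hW : ∀ t, (colWindow η t).det = 1 := hdet 0
  have key := det_colWindow_add_one η s _ hη
  rw [hW, hW] at key
  simp only [Fin.coe_ofNat_eq_mod, Nat.zero_mod, tsub_zero, add_tsub_cancel_right, mul_one] at key
  rw [← mul_assoc, ← pow_add, Even.neg_one_pow ⟨k, rfl⟩, one_mul] at key
  exact key.symm

/-- Suppose an array `(d i j)` with `d i (i-1) = 1` has South-East
diagonals satisfying `η_j = a_j^1 η_{j-1} - a_j^2 η_{j-2} + ⋯ + (-1)^k a_j^{k+1} η_{j-k-1}`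
for `n`-periodic coefficients, and every `(k+1)×(k+1)` determinant on consecutive
rows and columns equals `1`. Then `a_j^{k+1} = 1` for all `j`. -/
theorem stmt19 (k n : ℕ) (a : ℤ → ℕ → ℝ) (d : ℤ → ℤ → ℝ)
    (hper : ∀ (j : ℤ) (m : ℕ), a (j + (n : ℤ)) m = a j m)
    (hone : ∀ i : ℤ, d i (i - 1) = 1)
    (hrec : ∀ i j : ℤ, d i j =
      ∑ m ∈ Finset.Icc 1 (k + 1), (-1 : ℝ) ^ (m - 1) * a j m * d i (j - (m : ℤ)))
    (hdet : ∀ i j : ℤ,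
      (Matrix.of fun r c : Fin (k + 1) =>
        d (i + (r.val : ℤ)) (j + (c.val : ℤ))).det = 1) :
    ∀ j : ℤ, a j (k + 1) = 1 :=
  stmt19_general k a d hrec hdet
end
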